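/- arXiv:2312.14997 — 10 statements merged into one kernel-verified Lean document; each statement's English description precedes it below -/
import Mathlib

section
/- Let a > 0 and let h : ℝ → ℝ be continuous and bounded. Define F₁(t) = ∫_{τ ∈ (-∞, t]} h(τ) · g_a^1(t - τ) dτ. Then for every t ∈ ℝ, F₁ is differentiable at t with F₁'(t) = a·h(t) - a·F₁(t). -/
open Real MeasureTheory

/-- Erlang density with shape parameter `i` and rate parameter `a`. -/
noncomputable def erlang (a : ℝ) (i : ℕ) (t : ℝ) : ℝ :=
  a ^ i * t ^ (i - 1) * Real.exp (-a * t) / (Nat.factorial (i - 1))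

/-!
Since `g_a^1(t - τ) = a e^{-a t} e^{a τ}`, we have `F₁(t) = a e^{-a t} G(t)` with
`G(t) = ∫_{-∞}^t h(τ) e^{a τ} dτ`, an integral that converges because `h` is bounded and `a > 0`.
By the fundamental theorem of calculus `G'(t) = h(t) e^{a t}`, and the product rule gives
`F₁'(t) = -a F₁(t) + a h(t)`.
-/

open Set

theorem hasDerivAt_integral_Iic {E : Type*} [NormedAddCommGroup E] [NormedSpace ℝ E]
    [CompleteSpace E] {f : ℝ → E} {t : ℝ} (hf : ∀ u, IntegrableOn f (Iic u))
    (hft : ContinuousAt f t) : HasDerivAt (fun u => ∫ x in Iic u, f x) (f t) t := by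
  have hsplit : (fun u => ∫ x in Iic u, f x) = fun u => (∫ x in Iic t, f x) + ∫ x in t..u, f x :=
    funext fun u => by rw [← intervalIntegral.integral_Iic_sub_Iic (hf t) (hf u), add_sub_cancel]
  have hmeas : StronglyMeasurableAtFilter f (nhds t) :=
    AEStronglyMeasurable.stronglyMeasurableAtFilter_of_mem (hf (t + 1)).aestronglyMeasurable
      (Iic_mem_nhds (lt_add_one t))
  rw [hsplit]
  exact (intervalIntegral.integral_hasDerivAt_right .refl hmeas hft).const_add _

theorem erlang_one (a s : ℝ) : erlang a 1 s = a * exp (-a * s) := by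
  simp [erlang]

theorem integral_Iic_mul_erlang_one (a t : ℝ) (h : ℝ → ℝ) :
    ∫ τ in Iic t, h τ * erlang a 1 (t - τ) = a * exp (-a * t) * ∫ τ in Iic t, h τ * exp (a * τ) := by
  rw [← integral_const_mul]
  congr 1 with τ
  rw [erlang_one, show -a * (t - τ) = -a * t + a * τ by ring, exp_add]
  ring

theorem linear_chain_base (a : ℝ) (ha : 0 < a) (h : ℝ → ℝ)
    (hcont : Continuous h) (hbdd : ∃ M : ℝ, ∀ t : ℝ, |h t| ≤ M)
    (F₁ : ℝ → ℝ)
    (hF₁ : ∀ t : ℝ, F₁ t = ∫ τ in Set.Iic t, h τ * erlang a 1 (t - τ)) :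
    ∀ t : ℝ, HasDerivAt F₁ (a * h t - a * F₁ t) t := by
  intro t
  obtain ⟨M, hM⟩ := hbdd
  have hint (u : ℝ) : IntegrableOn (fun τ => h τ * exp (a * τ)) (Iic u) :=
    (integrableOn_exp_mul_Iic ha u).bdd_mul hcont.aestronglyMeasurable
      (Filter.Eventually.of_forall fun τ => (Real.norm_eq_abs _).trans_le (hM τ))
  have hG := hasDerivAt_integral_Iic (t := t) hint (by fun_prop)
  have hexp : HasDerivAt (fun u => a * exp (-a * u)) (a * (exp (-a * t) * -a)) t :=
    (((hasDerivAt_id t).const_mul (-a)).exp.const_mul a).congr_deriv (by simp)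
  rw [show F₁ = _ from funext fun u => (hF₁ u).trans (integral_Iic_mul_erlang_one a u h)]
  refine (hexp.mul hG).congr_deriv ?_
  have hcancel : exp (-a * t) * exp (a * t) = 1 := by rw [← exp_add]; simp
  beta_reduce
  linear_combination (a * h t) * hcancel
end

section
/- Let a > 0, c > 0, λ ≥ 0, let i ≥ 2 be an integer, let h : ℝ → ℝ be continuous and bounded, and let I : ℝ → ℝ be continuous, bounded, and nonnegative. Define G_j(t) = ∫_{τ ∈ (-∞, t]} h(τ) · exp(-c·∫_τ^t I(s) ds) · exp(-λ(t-τ)) · g_a^j(t - τ) dτ for each integer j ≥ 1. Then for every t ∈ ℝ, G_i is differentiable at t with G_i'(t) = a·(G_{i-1}(t) - G_i(t)) - (c·I(t) + λ)·G_i(t). -/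
open Real MeasureTheory

/-!
Writing `D t = c ∫₀ᵗ I + λ t`, the discount factor `exp (-c ∫_τ^t I - λ (t - τ))` equals
`exp (-D t) · exp (D τ)`, so `G_j = exp (-D) · H_j` with `H_j` the convolution over `(-∞, t]` of
the weight `w = h · exp D` with the Erlang density `g_a^j`. Since
`(g_a^j)' = a (g_a^{j-1} - g_a^j)` and `g_a^j (0) = 0` for `j ≥ 2`, differentiating under the
integral sign gives `H_j' = a (H_{j-1} - H_j)`, with no boundary term from the moving endpoint.
The product rule with `(exp (-D))' = -(c I + λ) exp (-D)` finishes the proof. As `D` is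
nondecreasing, `w` is bounded on every half-line `(-∞, T]`, and the exponential decay of `g_a^j`
supplies the integrable domination.
-/

open Set Filter Topology

lemma erlang_add_two_zero (a : ℝ) (n : ℕ) : erlang a (n + 2) 0 = 0 := by
  simp [erlang]

@[fun_prop]
lemma continuous_erlang (a : ℝ) (j : ℕ) : Continuous (erlang a j) := by
  unfold erlang; fun_prop

lemma hasDerivAt_erlang (a : ℝ) (n : ℕ) (u : ℝ) :
    HasDerivAt (erlang a (n + 2)) (a * (erlang a (n + 1) u - erlang a (n + 2) u)) u := by
  have hpow : HasDerivAt (fun u : ℝ => u ^ (n + 1)) ((n + 1 : ℕ) * u ^ n) u := by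
    simpa using hasDerivAt_pow (n + 1) u
  have hexp : HasDerivAt (fun u : ℝ => exp (-a * u)) (exp (-a * u) * -a) u := by
    simpa using ((hasDerivAt_id u).const_mul (-a)).exp
  refine ((((hpow.mul hexp).const_mul (a ^ (n + 2))).div_const ((n + 1).factorial : ℝ)
    ).congr_of_eventuallyEq (.of_forall fun v => by simp [erlang, mul_assoc])).congr_deriv ?_
  simp only [erlang, Nat.add_sub_cancel, Nat.factorial_succ, show n + 2 - 1 = n + 1 from rfl]
  push_cast
  field_simp
  ring

lemma abs_erlang_le {a : ℝ} (ha : 0 < a) (j : ℕ) {u : ℝ} (hu : -1 ≤ u) :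
    |erlang a j u| ≤ a ^ j * (2 / a) ^ (j - 1) * exp a * exp (-(a / 2) * u) := by
  have hfac : (0 : ℝ) < (j - 1).factorial := by positivity
  have hpow : |u| ^ (j - 1) ≤ (j - 1).factorial * (2 / a) ^ (j - 1) * exp (a / 2 * u + a) := by
    have h := (div_le_iff₀ hfac).1
      (pow_div_factorial_le_exp (x := a / 2 * |u|) (by positivity) (j - 1))
    have habs : a / 2 * |u| ≤ a / 2 * u + a := by
      rcases abs_cases u with ⟨h1, _⟩ | ⟨h1, _⟩ <;> rw [h1] <;> nlinarith
    calc |u| ^ (j - 1) = (2 / a) ^ (j - 1) * (a / 2 * |u|) ^ (j - 1) := by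
          rw [← mul_pow]; field_simp
      _ ≤ (2 / a) ^ (j - 1) * (exp (a / 2 * |u|) * (j - 1).factorial) := by gcongr
      _ ≤ (2 / a) ^ (j - 1) * (exp (a / 2 * u + a) * (j - 1).factorial) := by gcongr
      _ = _ := by ring
  calc |erlang a j u| = a ^ j * |u| ^ (j - 1) * exp (-a * u) / (j - 1).factorial := by
        simp [erlang, abs_mul, abs_div, abs_pow, abs_of_pos ha]
    _ ≤ a ^ j * ((j - 1).factorial * (2 / a) ^ (j - 1) * exp (a / 2 * u + a)) * exp (-a * u)
          / (j - 1).factorial := by gcongr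
    _ = a ^ j * (2 / a) ^ (j - 1) * (exp (a / 2 * u + a) * exp (-a * u)) := by field_simp
    _ = _ := by rw [mul_assoc _ (exp a), ← exp_add, ← exp_add]; ring_nf

lemma hasDerivAt_intervalIntegral_of_tendsto_zero {E : Type*} [NormedAddCommGroup E]
    [NormedSpace ℝ E] {F : ℝ → ℝ → E} {t₀ : ℝ}
    (hF : Tendsto (Function.uncurry F) (𝓝 (t₀, t₀)) (𝓝 0)) :
    HasDerivAt (fun t => ∫ τ in t₀..t, F t τ) 0 t₀ := by
  rw [hasDerivAt_iff_isLittleO, Asymptotics.isLittleO_iff]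
  intro ε hε
  obtain ⟨δ, hδ, hsmall⟩ := Metric.tendsto_nhds_nhds.1 hF ε hε
  filter_upwards [Metric.ball_mem_nhds t₀ hδ] with t ht
  simp only [intervalIntegral.integral_same, sub_zero, smul_zero, Real.norm_eq_abs]
  refine (intervalIntegral.norm_integral_le_of_norm_le_const fun τ hτ => ?_).trans_eq
    (by rw [abs_sub_comm])
  have hτt : |τ - t₀| ≤ |t - t₀| := by
    rcases Set.mem_uIoc.1 hτ with ⟨h1, h2⟩ | ⟨h1, h2⟩ <;>
      rw [abs_le] <;> constructor <;> linarith [le_abs_self (t - t₀), neg_abs_le (t - t₀)]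
  have hdist : dist (t, τ) (t₀, t₀) < δ := by
    rw [Prod.dist_eq, max_lt_iff, Real.dist_eq, Real.dist_eq]
    exact ⟨ht, hτt.trans_lt ht⟩
  simpa using (hsmall hdist).le

noncomputable def erlangConv (a : ℝ) (j : ℕ) (w : ℝ → ℝ) (t : ℝ) : ℝ :=
  ∫ τ in Iic t, w τ * erlang a j (t - τ)

section erlangConv

variable {a : ℝ} {w : ℝ → ℝ}

lemma exists_abs_mul_erlang_le (ha : 0 < a) (hwb : ∀ T, ∃ M, ∀ τ ≤ T, |w τ| ≤ M)
    (j : ℕ) (T : ℝ) :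
    ∃ C, ∀ t, T - 1 ≤ t → ∀ τ ≤ T, |w τ * erlang a j (t - τ)| ≤ C * exp (a / 2 * τ) := by
  obtain ⟨M, hM⟩ := hwb T
  have hM0 : 0 ≤ M := (abs_nonneg _).trans (hM T le_rfl)
  refine ⟨M * (a ^ j * (2 / a) ^ (j - 1) * exp a) * exp (-(a / 2) * (T - 1)),
    fun t ht τ hτ => ?_⟩
  have hexp : exp (-(a / 2) * (t - τ)) ≤ exp (-(a / 2) * (T - 1)) * exp (a / 2 * τ) := by
    rw [← exp_add]; gcongr; nlinarith
  rw [abs_mul]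
  calc |w τ| * |erlang a j (t - τ)|
      ≤ M * (a ^ j * (2 / a) ^ (j - 1) * exp a * exp (-(a / 2) * (t - τ))) :=
        mul_le_mul (hM τ hτ) (abs_erlang_le ha j (by linarith)) (abs_nonneg _) hM0
    _ ≤ M * (a ^ j * (2 / a) ^ (j - 1) * exp a *
          (exp (-(a / 2) * (T - 1)) * exp (a / 2 * τ))) := by gcongr
    _ = _ := by ring

lemma integrableOn_mul_erlang (ha : 0 < a) (hw : Continuous w)
    (hwb : ∀ T, ∃ M, ∀ τ ≤ T, |w τ| ≤ M) (j : ℕ) {t T : ℝ} (ht : T - 1 ≤ t) :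
    IntegrableOn (fun τ => w τ * erlang a j (t - τ)) (Iic T) := by
  obtain ⟨C, hC⟩ := exists_abs_mul_erlang_le ha hwb j T
  refine Integrable.mono' ((integrableOn_exp_mul_Iic (half_pos ha) T).const_mul C)
    (by fun_prop : Continuous fun τ => w τ * erlang a j (t - τ)).aestronglyMeasurable ?_
  filter_upwards [ae_restrict_mem measurableSet_Iic] with τ hτ
  exact hC t ht τ hτ

lemma hasDerivAt_erlangConv (ha : 0 < a) (hw : Continuous w)
    (hwb : ∀ T, ∃ M, ∀ τ ≤ T, |w τ| ≤ M) (n : ℕ) (t₀ : ℝ) :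
    HasDerivAt (erlangConv a (n + 2) w)
      (a * (erlangConv a (n + 1) w t₀ - erlangConv a (n + 2) w t₀)) t₀ := by
  set F : ℕ → ℝ → ℝ → ℝ := fun j t τ => w τ * erlang a j (t - τ) with hF
  have hint : ∀ j {t T : ℝ}, T - 1 ≤ t → IntegrableOn (F j t) (Iic T) :=
    fun j _ _ => integrableOn_mul_erlang ha hw hwb j
  have ht₀ : t₀ - 1 ≤ t₀ := sub_le_self _ zero_le_one
  obtain ⟨C₁, hC₁⟩ := exists_abs_mul_erlang_le ha hwb (n + 1) t₀
  obtain ⟨C₂, hC₂⟩ := exists_abs_mul_erlang_le ha hwb (n + 2) t₀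
  have hfixed : HasDerivAt (fun t => ∫ τ in Iic t₀, F (n + 2) t τ)
      (∫ τ in Iic t₀, a * (F (n + 1) t₀ τ - F (n + 2) t₀ τ)) t₀ := by
    refine (hasDerivAt_integral_of_dominated_loc_of_deriv_le (Metric.ball_mem_nhds t₀ one_pos)
      (F' := fun t τ => a * (F (n + 1) t τ - F (n + 2) t τ))
      (.of_forall fun t => (by fun_prop : Continuous (F (n + 2) t)).aestronglyMeasurable)
      (hint (n + 2) ht₀)
      (by fun_prop : Continuous fun τ => a * (F (n + 1) t₀ τ - F (n + 2) t₀ τ)).aestronglyMeasurable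
      (bound := fun τ => a * (C₁ * exp (a / 2 * τ) + C₂ * exp (a / 2 * τ))) ?_
      (((integrableOn_exp_mul_Iic (half_pos ha) t₀).const_mul C₁).add
        ((integrableOn_exp_mul_Iic (half_pos ha) t₀).const_mul C₂) |>.const_mul a)
      (.of_forall fun τ t _ => ?_)).2
    · filter_upwards [ae_restrict_mem measurableSet_Iic] with τ hτ t ht
      have ht' : t₀ - 1 ≤ t := by
        linarith [(abs_lt.1 (Metric.mem_ball.1 ht)).1]
      rw [Real.norm_eq_abs, abs_mul, abs_of_pos ha]
      gcongr
      exact (abs_sub _ _).trans (add_le_add (hC₁ t ht' τ hτ) (hC₂ t ht' τ hτ))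
    · refine (((hasDerivAt_erlang a n (t - τ)).comp_sub_const t τ).const_mul (w τ)).congr_deriv ?_
      simp only [hF]; ring
  -- the moving endpoint contributes nothing because `erlang a (n + 2)` vanishes at `0`
  have hmoving : HasDerivAt (fun t => ∫ τ in t₀..t, F (n + 2) t τ) 0 t₀ := by
    refine hasDerivAt_intervalIntegral_of_tendsto_zero ?_
    have hcont : Continuous (Function.uncurry (F (n + 2))) := by
      simp only [hF]; fun_prop
    simpa [hF, erlang_add_two_zero] using hcont.tendsto (t₀, t₀)
  have hsplit : ∀ᶠ t in 𝓝 t₀, erlangConv a (n + 2) w t =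
      (∫ τ in Iic t₀, F (n + 2) t τ) + ∫ τ in t₀..t, F (n + 2) t τ := by
    filter_upwards [Metric.ball_mem_nhds t₀ one_pos] with t ht
    have ht' : t₀ - 1 ≤ t := by linarith [(abs_lt.1 (Metric.mem_ball.1 ht)).1]
    exact eq_add_of_sub_eq' (intervalIntegral.integral_Iic_sub_Iic (hint (n + 2) ht')
      (hint (n + 2) (sub_le_self _ zero_le_one)))
  have hvalue : ∫ τ in Iic t₀, a * (F (n + 1) t₀ τ - F (n + 2) t₀ τ) =
      a * (erlangConv a (n + 1) w t₀ - erlangConv a (n + 2) w t₀) := by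
    rw [integral_const_mul, integral_sub (hint (n + 1) ht₀) (hint (n + 2) ht₀)]
    rfl
  simpa [hvalue] using (hfixed.add hmoving).congr_of_eventuallyEq hsplit

end erlangConv

noncomputable def cumHazard (c lam : ℝ) (I : ℝ → ℝ) (t : ℝ) : ℝ :=
  c * (∫ s in 0..t, I s) + lam * t

section cumHazard

variable {c lam : ℝ} {I : ℝ → ℝ}

lemma cumHazard_sub (hI : Continuous I) (t τ : ℝ) :
    cumHazard c lam I t - cumHazard c lam I τ = c * (∫ s in τ..t, I s) + lam * (t - τ) := by
  rw [cumHazard, cumHazard, ← intervalIntegral.integral_interval_sub_left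
    (hI.intervalIntegrable 0 t) (hI.intervalIntegrable 0 τ)]
  ring

lemma hasDerivAt_cumHazard (hI : Continuous I) (t : ℝ) :
    HasDerivAt (cumHazard c lam I) (c * I t + lam) t :=
  ((hI.integral_hasStrictDerivAt 0 t).hasDerivAt.const_mul c).add
    ((hasDerivAt_id' t).const_mul lam |>.congr_deriv (mul_one lam))

lemma monotone_cumHazard (hc : 0 ≤ c) (hlam : 0 ≤ lam) (hI : Continuous I)
    (hI0 : ∀ t, 0 ≤ I t) : Monotone (cumHazard c lam I) := by
  intro τ t hτt
  have hsub := cumHazard_sub (c := c) (lam := lam) hI t τ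
  have hint : 0 ≤ ∫ s in τ..t, I s := intervalIntegral.integral_nonneg hτt fun s _ => hI0 s
  nlinarith

end cumHazard

theorem linear_chain_infection_step_general (a c lam : ℝ) (ha : 0 < a) (hc : 0 < c) (hlam : 0 ≤ lam)
    (i : ℕ) (hi : 2 ≤ i)
    (h I : ℝ → ℝ)
    (hcont : Continuous h) (hbdd : ∃ M : ℝ, ∀ t : ℝ, |h t| ≤ M)
    (hIcont : Continuous I)
    (hIpos : ∀ t : ℝ, 0 ≤ I t)
    (G : ℕ → ℝ → ℝ)
    (hG : ∀ j : ℕ, 1 ≤ j → ∀ t : ℝ, G j t = ∫ τ in Set.Iic t,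
      h τ * Real.exp (-c * ∫ s in τ..t, I s) * Real.exp (-lam * (t - τ)) * erlang a j (t - τ)) :
    ∀ t : ℝ, HasDerivAt (G i) (a * (G (i - 1) t - G i t) - (c * I t + lam) * G i t) t := by
  intro t
  obtain ⟨n, rfl⟩ : ∃ n, i = n + 2 := ⟨i - 2, by omega⟩
  obtain ⟨M, hM⟩ := hbdd
  set D := cumHazard c lam I
  set w := fun τ => h τ * exp (D τ)
  have hGw : ∀ j, 1 ≤ j → G j = fun t => exp (-D t) * erlangConv a j w t := by
    refine fun j hj => funext fun t => ?_
    rw [hG j hj, erlangConv, ← integral_const_mul]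
    refine integral_congr_ae (.of_forall fun τ => ?_)
    have hD : -c * (∫ s in τ..t, I s) + -lam * (t - τ) = -D t + D τ := by
      linarith [cumHazard_sub (c := c) (lam := lam) hIcont t τ]
    simp only [w, mul_assoc, ← exp_add, hD]
    rw [exp_add]
    ring
  have hwcont : Continuous w := hcont.mul
    (continuous_iff_continuousAt.2 fun τ => (hasDerivAt_cumHazard hIcont τ).continuousAt).rexp
  have hwb : ∀ T, ∃ M, ∀ τ ≤ T, |w τ| ≤ M := fun T => ⟨M * exp (D T), fun τ hτ => by
    rw [abs_mul, abs_exp]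
    exact mul_le_mul (hM τ) (exp_le_exp.2 (monotone_cumHazard hc.le hlam hIcont hIpos hτ))
      (exp_pos _).le ((abs_nonneg _).trans (hM τ))⟩
  rw [show n + 2 - 1 = n + 1 from rfl, hGw (n + 2) (by omega), hGw (n + 1) (by omega)]
  exact ((hasDerivAt_cumHazard hIcont t).neg.exp.mul
    (hasDerivAt_erlangConv ha hwcont hwb n t)).congr_deriv (by simp only [Pi.neg_apply]; ring)

theorem linear_chain_infection_step (a c lam : ℝ) (ha : 0 < a) (hc : 0 < c) (hlam : 0 ≤ lam)
    (i : ℕ) (hi : 2 ≤ i)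
    (h I : ℝ → ℝ)
    (hcont : Continuous h) (hbdd : ∃ M : ℝ, ∀ t : ℝ, |h t| ≤ M)
    (hIcont : Continuous I) (hIbdd : ∃ M : ℝ, ∀ t : ℝ, |I t| ≤ M)
    (hIpos : ∀ t : ℝ, 0 ≤ I t)
    (G : ℕ → ℝ → ℝ)
    (hG : ∀ j : ℕ, 1 ≤ j → ∀ t : ℝ, G j t = ∫ τ in Set.Iic t,
      h τ * Real.exp (-c * ∫ s in τ..t, I s) * Real.exp (-lam * (t - τ)) * erlang a j (t - τ)) :
    ∀ t : ℝ, HasDerivAt (G i) (a * (G (i - 1) t - G i t) - (c * I t + lam) * G i t) t :=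
  linear_chain_infection_step_general a c lam ha hc hlam i hi h I hcont hbdd hIcont hIpos G hG
end

section
/- Let k ≥ 2 and 1 ≤ r ≤ k-1 be integers, let N, α, λ > 0 be reals, and let S₀, S₁, …, S_k be real numbers satisfying: kα·S₁ = λ·S₀; kα·S_{i+1} = (kα + λ)·S_i for 1 ≤ i ≤ r; S_{i+1} = S_i for r+1 ≤ i ≤ k-1; kα·S_k = λ·Σ_{i=0}^{r} S_i; and Σ_{i=0}^{k} S_i = N. Then S₀ = N·kα/(kα + (k-r)λ) · (kα/(kα + λ))^r. -/
/-- Disease-free steady state of the integrated immunity model: value of `S 0`. -/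
theorem integrated_dfe_S0
    (k r : ℕ) (hk : 2 ≤ k) (hr1 : 1 ≤ r) (hrk : r ≤ k - 1)
    (N α lam : ℝ) (hN : 0 < N) (hα : 0 < α) (hlam : 0 < lam)
    (S : ℕ → ℝ)
    (h1 : (k : ℝ) * α * S 1 = lam * S 0)
    (h2 : ∀ i : ℕ, 1 ≤ i → i ≤ r → (k : ℝ) * α * S (i + 1) = ((k : ℝ) * α + lam) * S i)
    (h3 : ∀ i : ℕ, r + 1 ≤ i → i ≤ k - 1 → S (i + 1) = S i)
    (h4 : (k : ℝ) * α * S k = lam * ∑ i ∈ Finset.range (r + 1), S i)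
    (h5 : ∑ i ∈ Finset.range (k + 1), S i = N) :
    S 0 = N * ((k : ℝ) * α) / ((k : ℝ) * α + ((k : ℝ) - (r : ℝ)) * lam) *
      ((k : ℝ) * α / ((k : ℝ) * α + lam)) ^ r := by
  set a := (k : ℝ) * α with ha
  have hkpos : (0:ℝ) < (k:ℝ) := by
    have : 0 < k := by omega
    exact_mod_cast this
  have hA : 0 < a := mul_pos hkpos hα
  have hrklt : (r:ℝ) < (k:ℝ) := by
    have : r < k := by omega
    exact_mod_cast this
  have hab : 0 < a + lam := by linarith
  have hc : 0 < a + ((k:ℝ) - (r:ℝ)) * lam := by nlinarith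
  have lemA : ∀ m, m ≤ r → a * S (m+1) = lam * ∑ i ∈ Finset.range (m+1), S i := by
    intro m
    induction m with
    | zero => intro _; simpa using h1
    | succ n ih =>
      intro hm
      have hn : n ≤ r := by omega
      rw [Finset.sum_range_succ, mul_add, ← ih hn]
      have h := h2 (n+1) (by omega) hm
      linear_combination h
  have lemB : ∀ m, m ≤ r →
      a ^ m * ∑ i ∈ Finset.range (m+1), S i = (a + lam) ^ m * S 0 := by
    intro m
    induction m with
    | zero => intro _; simp
    | succ n ih =>
      intro hm
      have hn : n ≤ r := by omega
      rw [Finset.sum_range_succ]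
      linear_combination (a + lam) * ih hn + a ^ n * lemA n hn
  have lemC : ∀ d, r + 1 + d ≤ k → S (r + 1 + d) = S (r + 1) := by
    intro d
    induction d with
    | zero => intro _; rfl
    | succ n ih =>
      intro hd
      have h := h3 (r+1+n) (by omega) (by omega)
      rw [show r + 1 + (n+1) = r + 1 + n + 1 from rfl, h, ih (by omega)]
  have hsplit : (∑ i ∈ Finset.range (r+1), S i) + ∑ i ∈ Finset.Ico (r+1) (k+1), S i
      = ∑ i ∈ Finset.range (k+1), S i :=
    Finset.sum_range_add_sum_Ico _ (by omega)
  have htail : ∑ i ∈ Finset.Ico (r+1) (k+1), S i = ((k:ℝ) - (r:ℝ)) * S (r+1) := by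
    have hcongr : ∀ i ∈ Finset.Ico (r+1) (k+1), S i = S (r+1) := by
      intro i hi
      simp only [Finset.mem_Ico] at hi
      have h := lemC (i - (r+1)) (by omega)
      rwa [show r + 1 + (i - (r+1)) = i from by omega] at h
    rw [Finset.sum_congr rfl hcongr, Finset.sum_const, Nat.card_Ico, nsmul_eq_mul]
    congr 1
    rw [show k + 1 - (r+1) = k - r from by omega, Nat.cast_sub (by omega : r ≤ k)]
  have h5' : (∑ i ∈ Finset.range (r+1), S i) + ((k:ℝ) - (r:ℝ)) * S (r+1) = N := by
    rw [← htail, hsplit, h5]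
  have hAr := lemA r le_rfl
  have hBr := lemB r le_rfl
  have key : a ^ (r+1) * N = (a + ((k:ℝ) - (r:ℝ)) * lam) * (a + lam) ^ r * S 0 := by
    linear_combination (-(a^(r+1))) * h5' + ((k:ℝ) - (r:ℝ)) * a ^ r * hAr
      + (a + ((k:ℝ) - (r:ℝ)) * lam) * hBr
  rw [div_pow]
  field_simp
  linear_combination (-1 : ℝ) * key
end

section
/- Let k ≥ 2 and 1 ≤ r ≤ k-1 be integers, let N, α, λ > 0 be reals, and let S₀, S₁, …, S_k be real numbers satisfying: kα·S₁ = λ·S₀; kα·S_{i+1} = (kα + λ)·S_i for 1 ≤ i ≤ r; S_{i+1} = S_i for r+1 ≤ i ≤ k-1; kα·S_k = λ·Σ_{i=0}^{r} S_i; and Σ_{i=0}^{k} S_i = N. Then S_i = (λ/(kα))·((kα + λ)/(kα))^{i-1}·S₀ for all 1 ≤ i ≤ r+1, and Σ_{i=0}^{r} S_i = ((kα + λ)/(kα))^r · S₀. -/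
/-- Disease-free steady state of the integrated immunity model: recursion solution and
geometric-series identity. -/
theorem integrated_dfe_recursion
    (k r : ℕ) (hk : 2 ≤ k) (hr1 : 1 ≤ r) (hrk : r ≤ k - 1)
    (N α lam : ℝ) (hN : 0 < N) (hα : 0 < α) (hlam : 0 < lam)
    (S : ℕ → ℝ)
    (h1 : (k : ℝ) * α * S 1 = lam * S 0)
    (h2 : ∀ i : ℕ, 1 ≤ i → i ≤ r → (k : ℝ) * α * S (i + 1) = ((k : ℝ) * α + lam) * S i)
    (h3 : ∀ i : ℕ, r + 1 ≤ i → i ≤ k - 1 → S (i + 1) = S i)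
    (h4 : (k : ℝ) * α * S k = lam * ∑ i ∈ Finset.range (r + 1), S i)
    (h5 : ∑ i ∈ Finset.range (k + 1), S i = N) :
    (∀ i : ℕ, 1 ≤ i → i ≤ r + 1 →
      S i = lam / ((k : ℝ) * α) * (((k : ℝ) * α + lam) / ((k : ℝ) * α)) ^ (i - 1) * S 0) ∧
    (∑ i ∈ Finset.range (r + 1), S i = (((k : ℝ) * α + lam) / ((k : ℝ) * α)) ^ r * S 0) := by
  have hk0 : (0:ℝ) < (k : ℝ) * α := by
    have hkpos : (0:ℝ) < (k:ℝ) := by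
      have : 0 < k := by omega
      exact_mod_cast this
    positivity
  have hkne : ((k : ℝ) * α) ≠ 0 := ne_of_gt hk0
  have hA : ∀ i : ℕ, 1 ≤ i → i ≤ r + 1 →
      S i = lam / ((k : ℝ) * α) * (((k : ℝ) * α + lam) / ((k : ℝ) * α)) ^ (i - 1) * S 0 := by
    intro i
    induction i with
    | zero => intro h; omega
    | succ n ih =>
      intro _ hle
      rcases Nat.eq_zero_or_pos n with hn | hn
      · subst hn
        have h1' : S 1 = lam / ((k : ℝ) * α) * S 0 := by
          field_simp
          linarith [h1]
        simpa using h1'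
      · have hnr : n ≤ r := by omega
        have hrec := h2 n hn hnr
        have hSn := ih hn (by omega)
        have hpow : (n + 1) - 1 = (n - 1) + 1 := by omega
        rw [hpow, pow_succ]
        have hSn1 : S (n+1) = ((k : ℝ) * α + lam) / ((k : ℝ) * α) * S n := by
          field_simp
          linarith [hrec]
        rw [hSn1, hSn]
        ring
  refine ⟨hA, ?_⟩
  have hB : ∀ m : ℕ, m ≤ r →
      ∑ i ∈ Finset.range (m + 1), S i = (((k : ℝ) * α + lam) / ((k : ℝ) * α)) ^ m * S 0 := by
    intro m
    induction m with
    | zero => intro _; simp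
    | succ n ih =>
      intro hle
      rw [Finset.sum_range_succ, ih (by omega), hA (n+1) (by omega) (by omega)]
      simp only [Nat.add_sub_cancel]
      rw [pow_succ]
      field_simp
  exact hB r le_rfl
end

section
/- Let k ≥ 2 and 1 ≤ r ≤ k-1 be integers, let N, β₂, γ, α, λ > 0 be reals, let I₂ > 0, and let S₀, S₁, …, S_k be real numbers satisfying: 0 = -(β₂/N)S₀I₂ + kα·S₁ - λS₀; 0 = -(β₂/N)S_iI₂ + kα·S_{i+1} - kα·S_i - λS_i for 1 ≤ i ≤ r; S_{i+1} = S_i for r+1 ≤ i ≤ k-1; 0 = γI₂ - kα·S_k + λ·Σ_{i=0}^{r} S_i; (β₂/N)·Σ_{i=0}^{r} S_i = γ; and Σ_{i=0}^{k} S_i + I₂ = N. Then I₂ = (N/β₂)·(β₂·kα - γ((k-r)λ + kα))/((k-r)γ + kα). -/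
/-!
Summing the balance equations of the levels `0, …, r` telescopes the waning fluxes, so
`kα S_{r+1} = (β₂ I₂ / N + λ) (S₀ + ⋯ + S_r)`, and the force-of-infection condition turns the
right-hand side into `γ I₂ + λ (S₀ + ⋯ + S_r)` with `S₀ + ⋯ + S_r = γ N / β₂`. The levels above `r`
all carry the value `S_{r+1}`, so the population constraint reads
`γ N / β₂ + (k - r) S_{r+1} + I₂ = N`, a linear system in `S_{r+1}` and `I₂`.
-/

open Finset

theorem mul_succ_eq_mul_sum_range_of_balance {R : Type*} [CommRing R] (c d : R) (S : ℕ → R)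
    (r : ℕ) (h0 : d * S 1 = c * S 0)
    (hstep : ∀ i, 1 ≤ i → i ≤ r → d * S (i + 1) = (c + d) * S i) :
    ∀ j ≤ r, d * S (j + 1) = c * ∑ i ∈ range (j + 1), S i := by
  intro j hj
  induction j with
  | zero => simpa using h0
  | succ n ih =>
    rw [hstep (n + 1) (by omega) hj, sum_range_succ, mul_add, ← ih (by omega)]
    ring

theorem sum_Ico_eq_card_smul_of_succ_eq {M : Type*} [AddCommMonoid M] (S : ℕ → M) {m n : ℕ}
    (h : ∀ i, m ≤ i → i + 1 < n → S (i + 1) = S i) :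
    ∑ i ∈ Ico m n, S i = (n - m) • S m := by
  have hconst : ∀ i ∈ Ico m n, S i = S m := by
    intro i hi
    obtain ⟨hmi, hin⟩ := mem_Ico.mp hi
    induction i, hmi using Nat.le_induction with
    | base => rfl
    | succ i hmi ih => rw [h i hmi hin, ih (mem_Ico.mpr ⟨hmi, by omega⟩) (by omega)]
  rw [sum_congr rfl hconst, sum_const, Nat.card_Ico]

theorem integrated_strain2_I2_general
    (k r : ℕ) (hk : 2 ≤ k) (hrk : r ≤ k - 1)
    (N β₂ γ α lam : ℝ) (hN : 0 < N) (hβ₂ : 0 < β₂) (hγ : 0 < γ) (hα : 0 < α)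
    (I₂ : ℝ)
    (S : ℕ → ℝ)
    (h1 : 0 = -(β₂ / N) * S 0 * I₂ + (k : ℝ) * α * S 1 - lam * S 0)
    (h2 : ∀ i : ℕ, 1 ≤ i → i ≤ r →
      0 = -(β₂ / N) * S i * I₂ + (k : ℝ) * α * S (i + 1) - (k : ℝ) * α * S i - lam * S i)
    (h3 : ∀ i : ℕ, r + 1 ≤ i → i ≤ k - 1 → S (i + 1) = S i)
    (h5 : (β₂ / N) * ∑ i ∈ Finset.range (r + 1), S i = γ)
    (h6 : ∑ i ∈ Finset.range (k + 1), S i + I₂ = N) :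
    I₂ = N / β₂ * ((β₂ * ((k : ℝ) * α) - γ * (((k : ℝ) - (r : ℝ)) * lam + (k : ℝ) * α)) /
      (((k : ℝ) - (r : ℝ)) * γ + (k : ℝ) * α)) := by
  have hrk' : r < k := by omega
  set T := ∑ i ∈ range (r + 1), S i
  have hT : β₂ * T = γ * N := by
    rw [← h5]; field_simp
  have hbalance : k * α * S (r + 1) = γ * I₂ + lam * T := by
    have hsum := mul_succ_eq_mul_sum_range_of_balance (β₂ / N * I₂ + lam) (k * α) S r
      (by linear_combination -h1) (fun i hi hir => by linear_combination -h2 i hi hir) r le_rfl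
    linear_combination hsum + I₂ * h5
  have htotal : ∑ i ∈ range (k + 1), S i = T + (k - r) * S (r + 1) := by
    rw [← sum_range_add_sum_Ico _ (by omega : r + 1 ≤ k + 1),
      sum_Ico_eq_card_smul_of_succ_eq S (fun i hi hik => h3 i hi (by omega)), nsmul_eq_mul,
      Nat.add_sub_add_right, Nat.cast_sub hrk'.le]
  rw [htotal] at h6
  have hden : ((k : ℝ) - r) * γ + k * α ≠ 0 := by
    have hkr : (r : ℝ) < k := by exact_mod_cast hrk'
    positivity
  rw [div_mul_div_comm, eq_div_iff (mul_ne_zero hβ₂.ne' hden)]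
  linear_combination β₂ * (k * α) * h6 - β₂ * (k - r) * hbalance
    - (k * α + (k - r) * lam) * hT

/-- Strain 2-only endemic steady state of the integrated immunity model: value of `I₂`. -/
theorem integrated_strain2_I2
    (k r : ℕ) (hk : 2 ≤ k) (hr1 : 1 ≤ r) (hrk : r ≤ k - 1)
    (N β₂ γ α lam : ℝ) (hN : 0 < N) (hβ₂ : 0 < β₂) (hγ : 0 < γ) (hα : 0 < α) (hlam : 0 < lam)
    (I₂ : ℝ) (hI₂ : 0 < I₂)
    (S : ℕ → ℝ)
    (h1 : 0 = -(β₂ / N) * S 0 * I₂ + (k : ℝ) * α * S 1 - lam * S 0)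
    (h2 : ∀ i : ℕ, 1 ≤ i → i ≤ r →
      0 = -(β₂ / N) * S i * I₂ + (k : ℝ) * α * S (i + 1) - (k : ℝ) * α * S i - lam * S i)
    (h3 : ∀ i : ℕ, r + 1 ≤ i → i ≤ k - 1 → S (i + 1) = S i)
    (h4 : 0 = γ * I₂ - (k : ℝ) * α * S k + lam * ∑ i ∈ Finset.range (r + 1), S i)
    (h5 : (β₂ / N) * ∑ i ∈ Finset.range (r + 1), S i = γ)
    (h6 : ∑ i ∈ Finset.range (k + 1), S i + I₂ = N) :
    I₂ = N / β₂ * ((β₂ * ((k : ℝ) * α) - γ * (((k : ℝ) - (r : ℝ)) * lam + (k : ℝ) * α)) /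
      (((k : ℝ) - (r : ℝ)) * γ + (k : ℝ) * α)) :=
  integrated_strain2_I2_general k r hk hrk N β₂ γ α lam hN hβ₂ hγ hα I₂ S h1 h2 h3 h5 h6
end

section
/- Let k ≥ 2 and 1 ≤ r ≤ k-1 be integers, let N, β₂, γ, α, λ > 0 be reals, let I₂ > 0, and let S₀, S₁, …, S_k be real numbers satisfying: 0 = -(β₂/N)S₀I₂ + kα·S₁ - λS₀; 0 = -(β₂/N)S_iI₂ + kα·S_{i+1} - kα·S_i - λS_i for 1 ≤ i ≤ r; S_{i+1} = S_i for r+1 ≤ i ≤ k-1; 0 = γI₂ - kα·S_k + λ·Σ_{i=0}^{r} S_i; (β₂/N)·Σ_{i=0}^{r} S_i = γ; and Σ_{i=0}^{k} S_i + I₂ = N. Then S₀ = (Nγ/β₂)·(((k-r)γ + kα)/(β₂ + λ - γ + (k-r)γ + kα))^r; consequently, for any β₁ > 0, β₁·S₀/(Nγ) = (β₁/β₂)·(((k-r)γ + kα)/(β₂ + λ - γ + (k-r)γ + kα))^r. -/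
/-- Strain 2-only endemic steady state of the integrated immunity model: value of `S 0`
and the competitive reproduction number of Strain 1 in the presence of Strain 2. -/
theorem integrated_strain2_S0_R12
    (k r : ℕ) (hk : 2 ≤ k) (hr1 : 1 ≤ r) (hrk : r ≤ k - 1)
    (N β₂ γ α lam : ℝ) (hN : 0 < N) (hβ₂ : 0 < β₂) (hγ : 0 < γ) (hα : 0 < α) (hlam : 0 < lam)
    (I₂ : ℝ) (hI₂ : 0 < I₂)
    (S : ℕ → ℝ)
    (h1 : 0 = -(β₂ / N) * S 0 * I₂ + (k : ℝ) * α * S 1 - lam * S 0)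
    (h2 : ∀ i : ℕ, 1 ≤ i → i ≤ r →
      0 = -(β₂ / N) * S i * I₂ + (k : ℝ) * α * S (i + 1) - (k : ℝ) * α * S i - lam * S i)
    (h3 : ∀ i : ℕ, r + 1 ≤ i → i ≤ k - 1 → S (i + 1) = S i)
    (h4 : 0 = γ * I₂ - (k : ℝ) * α * S k + lam * ∑ i ∈ Finset.range (r + 1), S i)
    (h5 : (β₂ / N) * ∑ i ∈ Finset.range (r + 1), S i = γ)
    (h6 : ∑ i ∈ Finset.range (k + 1), S i + I₂ = N) :
    S 0 = N * γ / β₂ * ((((k : ℝ) - (r : ℝ)) * γ + (k : ℝ) * α) /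
      (β₂ + lam - γ + ((k : ℝ) - (r : ℝ)) * γ + (k : ℝ) * α)) ^ r ∧
    (∀ β₁ : ℝ, 0 < β₁ → β₁ * S 0 / (N * γ) =
      β₁ / β₂ * ((((k : ℝ) - (r : ℝ)) * γ + (k : ℝ) * α) /
        (β₂ + lam - γ + ((k : ℝ) - (r : ℝ)) * γ + (k : ℝ) * α)) ^ r) := by
  have hrk' : r + 1 ≤ k := by omega
  have hkr1 : (1:ℝ) ≤ (k:ℝ) - (r:ℝ) := by
    have : ((r:ℝ) + 1) ≤ (k:ℝ) := by exact_mod_cast hrk'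
    linarith
  have hk0 : (0:ℝ) < (k:ℝ) := by
    have : 0 < k := by omega
    exact_mod_cast this
  have hka : 0 < (k:ℝ) * α := mul_pos hk0 hα
  have hx : 0 < β₂ / N * I₂ := by positivity
  have hxlam : 0 < β₂ / N * I₂ + lam := by positivity
  have hD : 0 < β₂ / N * I₂ + (k:ℝ) * α + lam := by positivity
  have hB : 0 < β₂ + lam - γ + ((k:ℝ) - (r:ℝ)) * γ + (k:ℝ) * α := by nlinarith
  -- recurrences
  have hrec : ∀ i : ℕ, 1 ≤ i → i ≤ r →
      (k:ℝ) * α * S (i+1) = (β₂ / N * I₂ + (k:ℝ) * α + lam) * S i := by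
    intro i hi1 hi2
    linear_combination - h2 i hi1 hi2
  have h1' : (k:ℝ) * α * S 1 = (β₂ / N * I₂ + lam) * S 0 := by
    linear_combination - h1
  have L1 : ∀ j, j ≤ r → (k:ℝ) * α * S (j+1)
      = (β₂ / N * I₂ + lam) * ∑ i ∈ Finset.range (j+1), S i := by
    intro j
    induction j with
    | zero => intro _; simpa [Finset.sum_range_one] using h1'
    | succ n ih =>
      intro hn
      rw [Finset.sum_range_succ]
      have e := hrec (n+1) (by omega) hn
      have i2 := ih (by omega)
      linear_combination e + i2
  have L2 : ∀ j, j ≤ r → S (j+1) * ((k:ℝ)*α)^j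
      = S 1 * (β₂ / N * I₂ + (k:ℝ) * α + lam)^j := by
    intro j
    induction j with
    | zero => intro _; simp
    | succ n ih =>
      intro hn
      have e := hrec (n+1) (by omega) hn
      have i2 := ih (by omega)
      linear_combination ((k:ℝ)*α)^n * e + (β₂ / N * I₂ + (k:ℝ) * α + lam) * i2
  have L3 : ∀ j, r + 1 ≤ j → j ≤ k → S j = S (r+1) := by
    intro j
    induction j with
    | zero => intro h _; omega
    | succ n ih =>
      intro h1h h2h
      rcases eq_or_lt_of_le h1h with h | h
      · rw [h]
      · have hrn : r + 1 ≤ n := by omega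
        rw [h3 n (by omega) (by omega)]
        exact ih hrn (by omega)
  have L4 : ∑ i ∈ Finset.range (k+1), S i
      = (∑ i ∈ Finset.range (r+1), S i) + ((k:ℝ) - (r:ℝ)) * S (r+1) := by
    rw [Finset.range_eq_Ico,
      ← Finset.sum_Ico_consecutive S (Nat.zero_le (r+1)) (by omega : r+1 ≤ k+1),
      ← Finset.range_eq_Ico]
    congr 1
    calc ∑ i ∈ Finset.Ico (r+1) (k+1), S i
        = ∑ _i ∈ Finset.Ico (r+1) (k+1), S (r+1) := by
          refine Finset.sum_congr rfl ?_
          intro i hi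
          have hm := Finset.mem_Ico.mp hi
          exact L3 i hm.1 (by omega)
      _ = ((k:ℝ) - (r:ℝ)) * S (r+1) := by
          rw [Finset.sum_const, Nat.card_Ico]
          have hc : ((k+1) - (r+1) : ℕ) = k - r := by omega
          rw [hc, nsmul_eq_mul, Nat.cast_sub (by omega : r ≤ k)]
  have e1 := L1 r le_rfl
  have e2' := L2 r le_rfl
  have e6 : (∑ i ∈ Finset.range (r+1), S i) + ((k:ℝ) - (r:ℝ)) * S (r+1) + I₂ = N := by
    rw [← L4]; exact h6
  have hcorr : β₂ / N * N = β₂ := by field_simp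
  have hX : (β₂ / N * I₂) * (((k:ℝ) - (r:ℝ)) * γ + (k:ℝ) * α)
      = (k:ℝ) * α * (β₂ - γ) - ((k:ℝ) - (r:ℝ)) * γ * lam := by
    linear_combination ((k:ℝ)*α*(β₂/N)) * e6
      - (((k:ℝ)-(r:ℝ))*(β₂/N)) * e1
      - ((k:ℝ)*α + ((k:ℝ)-(r:ℝ))*(β₂/N*I₂+lam)) * h5
      + ((k:ℝ)*α) * hcorr
  have hDA : (β₂ / N * I₂ + (k:ℝ)*α + lam) * (((k:ℝ) - (r:ℝ)) * γ + (k:ℝ) * α)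
      = (k:ℝ)*α * (β₂ + lam - γ + ((k:ℝ) - (r:ℝ)) * γ + (k:ℝ) * α) := by
    linear_combination hX
  have key : (∑ i ∈ Finset.range (r+1), S i) * ((k:ℝ)*α)^r
      = S 0 * (β₂ / N * I₂ + (k:ℝ)*α + lam)^r := by
    have e : (β₂ / N * I₂ + lam) * ((∑ i ∈ Finset.range (r+1), S i) * ((k:ℝ)*α)^r)
        = (β₂ / N * I₂ + lam) * (S 0 * (β₂ / N * I₂ + (k:ℝ)*α + lam)^r) := by
      linear_combination (-(((k:ℝ)*α)^r)) * e1 + ((k:ℝ)*α) * e2'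
        + ((β₂ / N * I₂ + (k:ℝ)*α + lam)^r) * h1'
    exact mul_left_cancel₀ (ne_of_gt hxlam) e
  have hpow' : ((k:ℝ)*α)^r * (β₂ + lam - γ + ((k:ℝ) - (r:ℝ)) * γ + (k:ℝ) * α)^r
      = (β₂ / N * I₂ + (k:ℝ)*α + lam)^r * (((k:ℝ) - (r:ℝ)) * γ + (k:ℝ) * α)^r := by
    rw [← mul_pow, ← mul_pow, ← hDA]
  have keyB : S 0 * (β₂ + lam - γ + ((k:ℝ) - (r:ℝ)) * γ + (k:ℝ) * α)^r
      = (∑ i ∈ Finset.range (r+1), S i) * (((k:ℝ) - (r:ℝ)) * γ + (k:ℝ) * α)^r := by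
    apply mul_right_cancel₀ (pow_ne_zero r (ne_of_gt hD))
    linear_combination (-((β₂ + lam - γ + ((k:ℝ) - (r:ℝ)) * γ + (k:ℝ) * α)^r)) * key
      + (∑ i ∈ Finset.range (r+1), S i) * hpow'
  have hT : (∑ i ∈ Finset.range (r+1), S i) = N * γ / β₂ := by
    field_simp at h5 ⊢
    linarith
  have first : S 0 = N * γ / β₂ * ((((k : ℝ) - (r : ℝ)) * γ + (k : ℝ) * α) /
      (β₂ + lam - γ + ((k : ℝ) - (r : ℝ)) * γ + (k : ℝ) * α)) ^ r := by
    rw [div_pow, ← hT, ← mul_div_assoc, eq_div_iff (pow_ne_zero r (ne_of_gt hB))]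
    exact keyB
  refine ⟨first, ?_⟩
  intro β₁ hβ₁
  rw [first]
  field_simp
end

section
/- Let k ≥ 2 and 1 ≤ r ≤ k-1 be integers, let N, β₁, β₂, γ, α, λ > 0 be reals, let I₁ > 0, and let S₀, S₁, …, S_k be real numbers satisfying: 0 = -(β₁/N)S₀I₁ + kα·S₁ - λS₀; kα·S_{i+1} = (kα + λ)·S_i for 1 ≤ i ≤ r; S_{i+1} = S_i for r+1 ≤ i ≤ k-1; 0 = γI₁ - kα·S_k + λ·Σ_{i=0}^{r} S_i; (β₁/N)·S₀ = γ; and Σ_{i=0}^{k} S_i + I₁ = N. Then (β₂/(γN))·Σ_{i=0}^{r} S_i = (β₂/β₁)·((γλ(k-r) + (β₁ + λ)kα)(kα + λ)^r - β₁(kα)^{r+1})/(γ(kα + (k-r)λ)(kα + λ)^r + (λ - γ)(kα)^{r+1}). -/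
/-!
Write `A = kα`. The condition `β₁ S₀ / N = γ` fixes `S₀`, the recursion makes `S₁, …, S_{r+1}`
geometric with ratio `(A + λ) / A`, and `S_{r+1} = ⋯ = S_k`. Hence `I₁`, the tail and
`Σ_{i ≤ r} S_i` (by telescoping `λ S_i = A S_{i+1} - A S_i`) are all affine in `S₁`, and the
population constraint `Σ S_i + I₁ = N` determines `S₁`, hence `Σ_{i ≤ r} S_i`.
-/

open Finset

theorem pow_mul_apply_succ_eq_of_mul_apply_succ_eq {M : Type*} [CommMonoid M] (S : ℕ → M)
    (a b : M) (r : ℕ) (h : ∀ i, 1 ≤ i → i ≤ r → a * S (i + 1) = b * S i) :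
    a ^ r * S (r + 1) = b ^ r * S 1 := by
  induction r with
  | zero => simp
  | succ r ih =>
    calc a ^ (r + 1) * S (r + 1 + 1) = a ^ r * (a * S (r + 1 + 1)) := by rw [pow_succ, mul_assoc]
      _ = b * (a ^ r * S (r + 1)) := by rw [h (r + 1) (by omega) le_rfl]; ac_rfl
      _ = b ^ (r + 1) * S 1 := by
        rw [ih fun i hi hir => h i hi (by omega), pow_succ]; ac_rfl

theorem mul_sum_range_eq_of_mul_apply_succ_eq {R : Type*} [CommRing R] (S : ℕ → R)
    (a c : R) (r : ℕ) (h : ∀ i, 1 ≤ i → i ≤ r → a * S (i + 1) = (a + c) * S i) :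
    c * ∑ i ∈ range (r + 1), S i = c * S 0 + a * (S (r + 1) - S 1) := by
  induction r with
  | zero => simp
  | succ r ih =>
    rw [sum_range_succ, mul_add, ih fun i hi hir => h i hi (by omega)]
    linear_combination -h (r + 1) (by omega) le_rfl

theorem apply_eq_of_apply_succ_eq {α : Type*} (S : ℕ → α) {m n : ℕ}
    (h : ∀ i, m ≤ i → i < n → S (i + 1) = S i) {i : ℕ} (hmi : m ≤ i) (hin : i ≤ n) :
    S i = S m := by
  induction i, hmi using Nat.le_induction with
  | base => rfl
  | succ i hmi ih => rw [h i hmi (by omega), ih (by omega)]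

theorem sum_range_succ_eq_of_apply_succ_eq {M : Type*} [AddCommMonoid M] (S : ℕ → M)
    {m n : ℕ} (hmn : m ≤ n + 1) (h : ∀ i, m ≤ i → i < n → S (i + 1) = S i) :
    ∑ i ∈ range (n + 1), S i = ∑ i ∈ range m, S i + (n + 1 - m) • S m := by
  rw [← sum_range_add_sum_Ico S hmn,
    sum_congr rfl fun i hi => apply_eq_of_apply_succ_eq S h (mem_Ico.1 hi).1
      (by have := (mem_Ico.1 hi).2; omega),
    sum_const, Nat.card_Ico]

theorem steady_state_den_pos {A L γ m : ℝ} (r : ℕ) (hA : 0 < A) (hL : 0 < L) (hγ : 0 < γ)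
    (hm : 0 ≤ m) : 0 < γ * (A + m * L) * (A + L) ^ r + (L - γ) * A ^ (r + 1) := by
  have hAr : A ^ r ≤ (A + L) ^ r := pow_le_pow_left₀ hA.le (by linarith) r
  calc 0 < γ * A * ((A + L) ^ r - A ^ r) + γ * m * L * (A + L) ^ r + L * A ^ (r + 1) := by
        have : 0 ≤ γ * A * ((A + L) ^ r - A ^ r) := mul_nonneg (by positivity) (by linarith)
        positivity
    _ = γ * (A + m * L) * (A + L) ^ r + (L - γ) * A ^ (r + 1) := by ring

theorem integrated_strain1_R21_general
    (k r : ℕ) (hk : 2 ≤ k) (hrk : r ≤ k - 1)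
    (N β₁ β₂ γ α lam : ℝ) (hN : 0 < N) (hβ₁ : 0 < β₁) (hγ : 0 < γ)
    (hα : 0 < α) (hlam : 0 < lam)
    (I₁ : ℝ)
    (S : ℕ → ℝ)
    (h1 : 0 = -(β₁ / N) * S 0 * I₁ + (k : ℝ) * α * S 1 - lam * S 0)
    (h2 : ∀ i : ℕ, 1 ≤ i → i ≤ r → (k : ℝ) * α * S (i + 1) = ((k : ℝ) * α + lam) * S i)
    (h3 : ∀ i : ℕ, r + 1 ≤ i → i ≤ k - 1 → S (i + 1) = S i)
    (h5 : (β₁ / N) * S 0 = γ)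
    (h6 : ∑ i ∈ Finset.range (k + 1), S i + I₁ = N) :
    β₂ / (γ * N) * ∑ i ∈ Finset.range (r + 1), S i =
      β₂ / β₁ *
        ((γ * lam * ((k : ℝ) - (r : ℝ)) + (β₁ + lam) * ((k : ℝ) * α)) *
            ((k : ℝ) * α + lam) ^ r - β₁ * ((k : ℝ) * α) ^ (r + 1)) /
        (γ * ((k : ℝ) * α + ((k : ℝ) - (r : ℝ)) * lam) * ((k : ℝ) * α + lam) ^ r +
          (lam - γ) * ((k : ℝ) * α) ^ (r + 1)) := by
  set A : ℝ := (k : ℝ) * α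
  set σ := ∑ i ∈ range (r + 1), S i
  have hkr : (r : ℝ) + 1 ≤ k := by exact_mod_cast (by omega : r + 1 ≤ k)
  have hA : 0 < A := mul_pos (by linarith) hα
  have hS0 : β₁ * S 0 = γ * N := by
    rw [← h5]; field_simp
  have hI : γ * I₁ = A * S 1 - lam * S 0 := by
    rw [← h5]; linear_combination h1
  have hgeo := pow_mul_apply_succ_eq_of_mul_apply_succ_eq S A (A + lam) r h2
  have htel := mul_sum_range_eq_of_mul_apply_succ_eq S A lam r h2
  have htail : ∑ i ∈ range (k + 1), S i = σ + ((k : ℝ) - r) * S (r + 1) := by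
    rw [sum_range_succ_eq_of_apply_succ_eq S (by omega) fun i hi hik => h3 i hi (by omega),
      nsmul_eq_mul, Nat.cast_sub (by omega)]
    push_cast; ring
  set Den := γ * (A + (k - r) * lam) * (A + lam) ^ r + (lam - γ) * A ^ (r + 1)
  have hden : 0 < Den := steady_state_den_pos r hA hlam hγ (by linarith : (0 : ℝ) ≤ k - r)
  have hS1 : S 1 * Den = lam * A ^ r * (γ * N - (γ - lam) * S 0) := by
    linear_combination γ * lam * A ^ r * (h6 - htail) - γ * A ^ r * htel
      - lam * A ^ r * hI - γ * ((k - r) * lam + A) * hgeo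
  have hkey : σ * Den =
      S 0 * ((γ * lam * (k - r) + (β₁ + lam) * A) * (A + lam) ^ r - β₁ * A ^ (r + 1)) := by
    -- telescoping and the geometric law give `λ Aʳ σ = λ Aʳ S₀ + A ((A + λ)ʳ - Aʳ) S₁`
    refine mul_left_cancel₀ (mul_ne_zero hlam.ne' (pow_pos hA r).ne') ?_
    linear_combination Den * (A ^ r * htel + A * hgeo) + A * ((A + lam) ^ r - A ^ r) * hS1
      - A * ((A + lam) ^ r - A ^ r) * lam * A ^ r * hS0
  have hS0ne : S 0 ≠ 0 := right_ne_zero_of_mul (hS0 ▸ (mul_pos hγ hN).ne')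
  rw [← hS0, eq_div_iff hden.ne', mul_assoc, hkey]
  field_simp

/-- Strain 1-only endemic steady state of the integrated immunity model: the competitive
reproduction number of Strain 2 in the presence of Strain 1. -/
theorem integrated_strain1_R21
    (k r : ℕ) (hk : 2 ≤ k) (hr1 : 1 ≤ r) (hrk : r ≤ k - 1)
    (N β₁ β₂ γ α lam : ℝ) (hN : 0 < N) (hβ₁ : 0 < β₁) (hβ₂ : 0 < β₂) (hγ : 0 < γ)
    (hα : 0 < α) (hlam : 0 < lam)
    (I₁ : ℝ) (hI₁ : 0 < I₁)
    (S : ℕ → ℝ)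
    (h1 : 0 = -(β₁ / N) * S 0 * I₁ + (k : ℝ) * α * S 1 - lam * S 0)
    (h2 : ∀ i : ℕ, 1 ≤ i → i ≤ r → (k : ℝ) * α * S (i + 1) = ((k : ℝ) * α + lam) * S i)
    (h3 : ∀ i : ℕ, r + 1 ≤ i → i ≤ k - 1 → S (i + 1) = S i)
    (h4 : 0 = γ * I₁ - (k : ℝ) * α * S k + lam * ∑ i ∈ Finset.range (r + 1), S i)
    (h5 : (β₁ / N) * S 0 = γ)
    (h6 : ∑ i ∈ Finset.range (k + 1), S i + I₁ = N) :
    β₂ / (γ * N) * ∑ i ∈ Finset.range (r + 1), S i =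
      β₂ / β₁ *
        ((γ * lam * ((k : ℝ) - (r : ℝ)) + (β₁ + lam) * ((k : ℝ) * α)) *
            ((k : ℝ) * α + lam) ^ r - β₁ * ((k : ℝ) * α) ^ (r + 1)) /
        (γ * ((k : ℝ) * α + ((k : ℝ) - (r : ℝ)) * lam) * ((k : ℝ) * α + lam) ^ r +
          (lam - γ) * ((k : ℝ) * α) ^ (r + 1)) :=
  integrated_strain1_R21_general k r hk hrk N β₁ β₂ γ α lam hN hβ₁ hγ hα hlam I₁ S h1 h2 h3 h5 h6
end

section
/- Let k ≥ 2 and 1 ≤ r ≤ k-1 be integers, let N, β₂, γ, α, λ > 0 be reals, let I₂ > 0, and let S₀, S₁, …, S_k, V be real numbers satisfying: 0 = -(β₂/N)S₀I₂ + kα·S₁ - λS₀ + αV; 0 = -(β₂/N)S_iI₂ + kα·S_{i+1} - kα·S_i - λS_i for 1 ≤ i ≤ r; S_{i+1} = S_i for r+1 ≤ i ≤ k-1; γI₂ = kα·S_k; (β₂/N)·Σ_{i=0}^{r} S_i = γ; λ·Σ_{i=0}^{r} S_i = αV; and Σ_{i=0}^{k} S_i + V + I₂ = N. Then I₂ = N·k·(αβ₂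 - (α + λ)γ)/(β₂·(kα + (k-r)γ)). -/
/-- Strain 2-only endemic steady state of the separated immunity model: value of `I₂`. -/
theorem separated_strain2_I2
    (k r : ℕ) (hk : 2 ≤ k) (hr1 : 1 ≤ r) (hrk : r ≤ k - 1)
    (N β₂ γ α lam : ℝ) (hN : 0 < N) (hβ₂ : 0 < β₂) (hγ : 0 < γ) (hα : 0 < α) (hlam : 0 < lam)
    (I₂ : ℝ) (hI₂ : 0 < I₂)
    (S : ℕ → ℝ) (V : ℝ)
    (h1 : 0 = -(β₂ / N) * S 0 * I₂ + (k : ℝ) * α * S 1 - lam * S 0 + α * V)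
    (h2 : ∀ i : ℕ, 1 ≤ i → i ≤ r →
      0 = -(β₂ / N) * S i * I₂ + (k : ℝ) * α * S (i + 1) - (k : ℝ) * α * S i - lam * S i)
    (h3 : ∀ i : ℕ, r + 1 ≤ i → i ≤ k - 1 → S (i + 1) = S i)
    (h4 : γ * I₂ = (k : ℝ) * α * S k)
    (h5 : (β₂ / N) * ∑ i ∈ Finset.range (r + 1), S i = γ)
    (h6 : lam * ∑ i ∈ Finset.range (r + 1), S i = α * V)
    (h7 : ∑ i ∈ Finset.range (k + 1), S i + V + I₂ = N) :
    I₂ = N * (k : ℝ) * (α * β₂ - (α + lam) * γ) /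
      (β₂ * ((k : ℝ) * α + ((k : ℝ) - (r : ℝ)) * γ)) := by
  have hrltk : r < k := by omega
  have hNne : N ≠ 0 := ne_of_gt hN
  set T := ∑ i ∈ Finset.range (r + 1), S i with hT
  -- telescoping sum of the middle equations
  have key : ∀ j, j ≤ r → (k : ℝ) * α * S (j + 1) =
      (β₂ / N) * I₂ * (∑ i ∈ Finset.range (j + 1), S i)
      + lam * (∑ i ∈ Finset.range (j + 1), S i) - α * V := by
    intro j hj
    induction j with
    | zero =>
      simp only [zero_add, Nat.cast_zero, Finset.sum_range_one]
      linear_combination -h1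
    | succ n ih =>
      have hn : n ≤ r := by omega
      have h2' := h2 (n + 1) (by omega) hj
      have ihn := ih hn
      rw [Finset.sum_range_succ]
      linear_combination ihn - h2'
  have hS : (k : ℝ) * α * S (r + 1) = γ * I₂ := by
    have hk' := key r le_rfl
    rw [← hT] at hk'
    linear_combination hk' + I₂ * h5 + h6
  -- S is constant from r+1 to k
  have hconst : ∀ i, r + 1 ≤ i → i ≤ k → S i = S (r + 1) := by
    intro i hi1 hi2
    induction i with
    | zero => omega
    | succ n ih =>
      rcases Nat.eq_or_lt_of_le hi1 with h | h
      · rw [← h]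
      · have hn1 : r + 1 ≤ n := by omega
        have hnk : n ≤ k - 1 := by omega
        rw [h3 n hn1 hnk, ih hn1 (by omega)]
  have hsplit : ∑ i ∈ Finset.range (k + 1), S i
      = T + ((k : ℝ) - (r : ℝ)) * S (r + 1) := by
    rw [← Finset.sum_range_add_sum_Ico S (by omega : r + 1 ≤ k + 1), ← hT]
    congr 1
    rw [Finset.sum_congr rfl (fun i hi => by
      have hm := Finset.mem_Ico.mp hi
      exact hconst i hm.1 (by omega))]
    rw [Finset.sum_const, Nat.card_Ico, nsmul_eq_mul]
    have : (k + 1 - (r + 1) : ℕ) = k - r := by omega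
    rw [this, Nat.cast_sub (le_of_lt hrltk)]
  rw [hsplit] at h7
  have h5' : β₂ * T = γ * N := by
    field_simp at h5
    linarith
  have hkr : (0 : ℝ) < (k : ℝ) - r := by
    have : (r : ℝ) < k := by exact_mod_cast hrltk
    linarith
  have hkpos : (0 : ℝ) < (k : ℝ) := by positivity
  have hden : β₂ * ((k : ℝ) * α + ((k : ℝ) - (r : ℝ)) * γ) ≠ 0 :=
    ne_of_gt (mul_pos hβ₂ (add_pos (mul_pos hkpos hα) (mul_pos hkr hγ)))
  rw [eq_div_iff hden]
  linear_combination ((k : ℝ) * α * β₂) * h7 - β₂ * ((k : ℝ) - r) * hS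
    - ((k : ℝ) * α + (k : ℝ) * lam) * h5' + (k : ℝ) * β₂ * h6
end

section
/- Let k ≥ 2 and 1 ≤ r ≤ k-1 be integers, let N, β₁, β₂, γ, α, λ > 0 be reals, let I₂ > 0, and let S₀, S₁, …, S_k, V be real numbers satisfying: 0 = -(β₂/N)S₀I₂ + kα·S₁ - λS₀ + αV; 0 = -(β₂/N)S_iI₂ + kα·S_{i+1} - kα·S_i - λS_i for 1 ≤ i ≤ r; S_{i+1} = S_i for r+1 ≤ i ≤ k-1; γI₂ = kα·S_k; (β₂/N)·Σ_{i=0}^{r} S_i = γ; λ·Σ_{i=0}^{r} S_i = αV; and Σ_{i=0}^{k} S_i + V + I₂ = N. Assume additionally that kα(β₂ - γ + λ) - γλr ≠ 0 and (kα)² + kα((k-r-1)γ + β₂ + λ) - γλr ≠ 0. Then β₁·S₀/(Nγ) = (β₁/β₂)·[(kα(β₂ - γ) - γλk)·(kα((k-r)γ + kα)/((kα)² + kα((k-r-1)γ + β₂ + λ) - γλr))^r + λ((k-r)γ + kα)]/(kα(β₂ - γ + λ) - γλr). -/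
open Finset

/-! The equations for `S 1, …, S (r + 1)` form a first-order linear recurrence, so with the force
of infection `u = β₂ I₂ / N` one gets `kα S 1 = (kα / (u + kα + λ)) ^ r · kα S (r + 1)`, while all
compartments from `r + 1` to `k` are equal, with `kα S (r + 1) = γ I₂`. Substituting into the
population balance, and using `T = ∑_{i ≤ r} S i = Nγ / β₂`, determines `u` linearly:
`u ((k - r) γ + kα) = kα (β₂ - γ) - γλk`. Both denominators of the formula therefore factor,
as `(u + λ) ((k - r) γ + kα)` and `(u + kα + λ) ((k - r) γ + kα)`, and the equation for `S 0`,
`(u + λ) S 0 = kα S 1 + λ T`, gives the result. -/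

theorem pow_mul_add_eq_pow_mul_of_forall_mul_succ {M : Type*} [CommMonoid M] {x : ℕ → M}
    {a c : M} {m n : ℕ} (h : ∀ i, m ≤ i → i < m + n → a * x (i + 1) = c * x i) :
    a ^ n * x (m + n) = c ^ n * x m := by
  induction n with
  | zero => simp
  | succ n ih =>
    calc a ^ (n + 1) * x (m + n + 1) = a ^ n * (a * x (m + n + 1)) := by rw [pow_succ, mul_assoc]
      _ = c * (a ^ n * x (m + n)) := by rw [h (m + n) (by omega) (by omega), mul_left_comm]
      _ = c ^ (n + 1) * x m := by
        rw [ih fun i hm hi => h i hm (by omega), ← mul_assoc, pow_succ']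

theorem mul_apply_eq_mul_apply_add_mul_div_pow {K : Type*} [Field K] {x : ℕ → K} {a c : K}
    {m n : ℕ} (hc : c ≠ 0) (h : ∀ i, m ≤ i → i < m + n → a * x (i + 1) = c * x i) :
    a * x m = a * x (m + n) * (a / c) ^ n := by
  rw [div_pow, mul_div_assoc', eq_div_iff (pow_ne_zero n hc)]
  linear_combination (-a) * pow_mul_add_eq_pow_mul_of_forall_mul_succ h

theorem apply_eq_of_forall_succ_eq {α : Type*} {x : ℕ → α} {m l : ℕ}
    (h : ∀ i, m ≤ i → i < l → x (i + 1) = x i) {j : ℕ} (hmj : m ≤ j) (hjl : j ≤ l) :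
    x j = x m := by
  induction j, hmj using Nat.le_induction with
  | base => rfl
  | succ j hmj ih => rw [h j hmj hjl, ih (by omega)]

theorem sum_range_succ_eq_add_mul_of_forall_succ_eq {R : Type*} [Ring R] {x : ℕ → R} {m l : ℕ}
    (hml : m < l) (h : ∀ i, m + 1 ≤ i → i < l → x (i + 1) = x i) :
    ∑ i ∈ range (l + 1), x i = ∑ i ∈ range (m + 1), x i + ((l : R) - m) * x (m + 1) := by
  rw [← sum_range_add_sum_Ico _ (by omega : m + 1 ≤ l + 1),
    sum_congr rfl fun j hj => apply_eq_of_forall_succ_eq h (mem_Ico.mp hj).1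
      (Nat.lt_succ_iff.mp (mem_Ico.mp hj).2), sum_const, Nat.card_Ico, nsmul_eq_mul,
    Nat.cast_sub (by omega), Nat.cast_succ, Nat.cast_succ, add_sub_add_right_eq_sub]

theorem force_of_infection_mul_eq {N β γ α lam κ ρ I T V Sr : ℝ} (hN : N ≠ 0) (hT : β * T = N * γ)
    (hI : γ * I = κ * α * Sr) (hV : lam * T = α * V) (hpop : T + (κ - ρ) * Sr + V + I = N) :
    β / N * I * ((κ - ρ) * γ + κ * α) = κ * α * (β - γ) - γ * lam * κ := by
  rw [div_mul_eq_mul_div, div_mul_eq_mul_div, div_eq_iff hN]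
  linear_combination κ * α * β * hpop - κ * (α + lam) * hT + (κ - ρ) * β * hI + κ * β * hV

theorem separated_strain2_R12_general
    (k r : ℕ) (hk : 2 ≤ k) (hrk : r ≤ k - 1)
    (N β₁ β₂ γ α lam : ℝ) (hN : 0 < N) (hγ : 0 < γ)
    (I₂ : ℝ)
    (S : ℕ → ℝ) (V : ℝ)
    (h1 : 0 = -(β₂ / N) * S 0 * I₂ + (k : ℝ) * α * S 1 - lam * S 0 + α * V)
    (h2 : ∀ i : ℕ, 1 ≤ i → i ≤ r →
      0 = -(β₂ / N) * S i * I₂ + (k : ℝ) * α * S (i + 1) - (k : ℝ) * α * S i - lam * S i)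
    (h3 : ∀ i : ℕ, r + 1 ≤ i → i ≤ k - 1 → S (i + 1) = S i)
    (h4 : γ * I₂ = (k : ℝ) * α * S k)
    (h5 : (β₂ / N) * ∑ i ∈ Finset.range (r + 1), S i = γ)
    (h6 : lam * ∑ i ∈ Finset.range (r + 1), S i = α * V)
    (h7 : ∑ i ∈ Finset.range (k + 1), S i + V + I₂ = N)
    (hden1 : (k : ℝ) * α * (β₂ - γ + lam) - γ * lam * (r : ℝ) ≠ 0)
    (hden2 : ((k : ℝ) * α) ^ 2 +
      (k : ℝ) * α * (((k : ℝ) - (r : ℝ) - 1) * γ + β₂ + lam) - γ * lam * (r : ℝ) ≠ 0) :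
    β₁ * S 0 / (N * γ) =
      β₁ / β₂ *
        (((k : ℝ) * α * (β₂ - γ) - γ * lam * (k : ℝ)) *
            ((k : ℝ) * α * (((k : ℝ) - (r : ℝ)) * γ + (k : ℝ) * α) /
              (((k : ℝ) * α) ^ 2 +
                (k : ℝ) * α * (((k : ℝ) - (r : ℝ) - 1) * γ + β₂ + lam) -
                γ * lam * (r : ℝ))) ^ r +
          lam * (((k : ℝ) - (r : ℝ)) * γ + (k : ℝ) * α)) /
        ((k : ℝ) * α * (β₂ - γ + lam) - γ * lam * (r : ℝ)) := by
  set u := β₂ / N * I₂ with hu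
  set T := ∑ i ∈ range (r + 1), S i
  set A := ((k : ℝ) - r) * γ + k * α
  have hT : β₂ * T = N * γ := by rw [← h5, div_mul_eq_mul_div, mul_div_cancel₀ _ hN.ne']
  have hT0 : T ≠ 0 := right_ne_zero_of_mul (hT ▸ mul_ne_zero hN.ne' hγ.ne')
  have hconst (i) (hi : r + 1 ≤ i) (hik : i < k) : S (i + 1) = S i := h3 i hi (by omega)
  have hI₂_eq : γ * I₂ = k * α * S (r + 1) := by
    rw [h4, apply_eq_of_forall_succ_eq hconst (by omega) le_rfl]
  have hA : u * A = k * α * (β₂ - γ) - γ * lam * k := force_of_infection_mul_eq hN.ne' hT hI₂_eq h6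
    (by rw [← h7, sum_range_succ_eq_add_mul_of_forall_succ_eq (by omega) hconst])
  rw [show (k : ℝ) * α * (β₂ - γ + lam) - γ * lam * r = (u + lam) * A by
    linear_combination -hA] at hden1 ⊢
  rw [show ((k : ℝ) * α) ^ 2 + k * α * (((k : ℝ) - r - 1) * γ + β₂ + lam) - γ * lam * r
    = (u + k * α + lam) * A by linear_combination -hA] at hden2 ⊢
  obtain ⟨hul, hA0⟩ := mul_ne_zero_iff.mp hden1
  have hS1 : k * α * S 1 = u * T * (k * α / (u + k * α + lam)) ^ r := by
    rw [mul_apply_eq_mul_apply_add_mul_div_pow (m := 1) (n := r) (left_ne_zero_of_mul hden2)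
      fun i hm hi => by linear_combination -h2 i hm (by omega), add_comm, ← hI₂_eq, hu, ← h5]
    ring
  have hS0 : S 0 = (u * (k * α / (u + k * α + lam)) ^ r + lam) * T / (u + lam) := by
    rw [eq_div_iff hul]
    linear_combination h1 - h6 + hS1
  rw [mul_div_mul_right _ _ hA0, ← hA, hS0, ← hT]
  field_simp

/-- Strain 2-only endemic steady state of the separated immunity model: the competitive
reproduction number of Strain 1 in the presence of Strain 2. -/
theorem separated_strain2_R12
    (k r : ℕ) (hk : 2 ≤ k) (hr1 : 1 ≤ r) (hrk : r ≤ k - 1)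
    (N β₁ β₂ γ α lam : ℝ) (hN : 0 < N) (hβ₁ : 0 < β₁) (hβ₂ : 0 < β₂) (hγ : 0 < γ)
    (hα : 0 < α) (hlam : 0 < lam)
    (I₂ : ℝ) (hI₂ : 0 < I₂)
    (S : ℕ → ℝ) (V : ℝ)
    (h1 : 0 = -(β₂ / N) * S 0 * I₂ + (k : ℝ) * α * S 1 - lam * S 0 + α * V)
    (h2 : ∀ i : ℕ, 1 ≤ i → i ≤ r →
      0 = -(β₂ / N) * S i * I₂ + (k : ℝ) * α * S (i + 1) - (k : ℝ) * α * S i - lam * S i)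
    (h3 : ∀ i : ℕ, r + 1 ≤ i → i ≤ k - 1 → S (i + 1) = S i)
    (h4 : γ * I₂ = (k : ℝ) * α * S k)
    (h5 : (β₂ / N) * ∑ i ∈ Finset.range (r + 1), S i = γ)
    (h6 : lam * ∑ i ∈ Finset.range (r + 1), S i = α * V)
    (h7 : ∑ i ∈ Finset.range (k + 1), S i + V + I₂ = N)
    (hden1 : (k : ℝ) * α * (β₂ - γ + lam) - γ * lam * (r : ℝ) ≠ 0)
    (hden2 : ((k : ℝ) * α) ^ 2 +
      (k : ℝ) * α * (((k : ℝ) - (r : ℝ) - 1) * γ + β₂ + lam) - γ * lam * (r : ℝ) ≠ 0) :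
    β₁ * S 0 / (N * γ) =
      β₁ / β₂ *
        (((k : ℝ) * α * (β₂ - γ) - γ * lam * (k : ℝ)) *
            ((k : ℝ) * α * (((k : ℝ) - (r : ℝ)) * γ + (k : ℝ) * α) /
              (((k : ℝ) * α) ^ 2 +
                (k : ℝ) * α * (((k : ℝ) - (r : ℝ) - 1) * γ + β₂ + lam) -
                γ * lam * (r : ℝ))) ^ r +
          lam * (((k : ℝ) - (r : ℝ)) * γ + (k : ℝ) * α)) /
        ((k : ℝ) * α * (β₂ - γ + lam) - γ * lam * (r : ℝ)) :=
  separated_strain2_R12_general k r hk hrk N β₁ β₂ γ α lam hN hγ I₂ S V h1 h2 h3 h4 h5 h6 h7 hden1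
    hden2
end

section
/- Let k ≥ 2 and 1 ≤ r ≤ k-1 be integers, let N, β₁, β₂, γ, α, λ > 0 be reals, let I₁ > 0, and let S₀, S₁, …, S_k, V be real numbers satisfying: 0 = -(β₁/N)S₀I₁ + kα·S₁ - λS₀ + αV; kα·S_{i+1} = (kα + λ)·S_i for 1 ≤ i ≤ r; S_{i+1} = S_i for r+1 ≤ i ≤ k-1; γI₁ = kα·S_k; (β₁/N)·S₀ = γ; λ·Σ_{i=0}^{r} S_i = αV; and Σ_{i=0}^{k} S_i + V + I₁ = N. Assume additionally that kγ(α + λ)(kα)^r + (γλr - ((α + 2γ)λ + αγ)k)(αk + λ)^r ≠ 0. Then (β₂/(γN))·Σ_{i=0}^{r} S_i = (β₂/β₁)·[αβ₁k(kα)^r + (γλr - ((α + γ)λ + αβ₁)k)(αk + λ)^r] / [kγ(α + λ)(kα)^r + (γλr - ((α + 2γ)λ + αγ)k)(αk + λ)^r]. -/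
/-- Strain 1-only endemic steady state of the separated immunity model: the competitive
reproduction number of Strain 2 in the presence of Strain 1. -/
theorem separated_strain1_R21
    (k r : ℕ) (hk : 2 ≤ k) (hr1 : 1 ≤ r) (hrk : r ≤ k - 1)
    (N β₁ β₂ γ α lam : ℝ) (hN : 0 < N) (hβ₁ : 0 < β₁) (hβ₂ : 0 < β₂) (hγ : 0 < γ)
    (hα : 0 < α) (hlam : 0 < lam)
    (I₁ : ℝ) (hI₁ : 0 < I₁)
    (S : ℕ → ℝ) (V : ℝ)
    (h1 : 0 = -(β₁ / N) * S 0 * I₁ + (k : ℝ) * α * S 1 - lam * S 0 + α * V)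
    (h2 : ∀ i : ℕ, 1 ≤ i → i ≤ r → (k : ℝ) * α * S (i + 1) = ((k : ℝ) * α + lam) * S i)
    (h3 : ∀ i : ℕ, r + 1 ≤ i → i ≤ k - 1 → S (i + 1) = S i)
    (h4 : γ * I₁ = (k : ℝ) * α * S k)
    (h5 : (β₁ / N) * S 0 = γ)
    (h6 : lam * ∑ i ∈ Finset.range (r + 1), S i = α * V)
    (h7 : ∑ i ∈ Finset.range (k + 1), S i + V + I₁ = N)
    (hden : (k : ℝ) * γ * (α + lam) * ((k : ℝ) * α) ^ r +
      (γ * lam * (r : ℝ) - ((α + 2 * γ) * lam + α * γ) * (k : ℝ)) *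
        (α * (k : ℝ) + lam) ^ r ≠ 0) :
    β₂ / (γ * N) * ∑ i ∈ Finset.range (r + 1), S i =
      β₂ / β₁ *
        (α * β₁ * (k : ℝ) * ((k : ℝ) * α) ^ r +
          (γ * lam * (r : ℝ) - ((α + γ) * lam + α * β₁) * (k : ℝ)) *
            (α * (k : ℝ) + lam) ^ r) /
        ((k : ℝ) * γ * (α + lam) * ((k : ℝ) * α) ^ r +
          (γ * lam * (r : ℝ) - ((α + 2 * γ) * lam + α * γ) * (k : ℝ)) *
            (α * (k : ℝ) + lam) ^ r) := by
  have hrk1 : r + 1 ≤ k := by omega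
  have hkpos : (0:ℝ) < (k:ℝ) := by positivity
  have hB0 : (0:ℝ) < ((k:ℝ) * α + lam) ^ r := by positivity
  -- power relation
  have hpow : ((k:ℝ) * α + lam) ^ r * S 1 = ((k:ℝ) * α) ^ r * S (r + 1) := by
    have key : ∀ i, i ≤ r → ((k:ℝ) * α + lam) ^ i * S 1 = ((k:ℝ) * α) ^ i * S (i + 1) := by
      intro i
      induction i with
      | zero => intro _; simp
      | succ n ih =>
        intro h
        have h2' := h2 (n + 1) (by omega) (by omega)
        have ihn := ih (by omega)
        rw [pow_succ, pow_succ]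
        calc ((k:ℝ) * α + lam) ^ n * ((k:ℝ) * α + lam) * S 1
            = ((k:ℝ) * α + lam) * (((k:ℝ) * α + lam) ^ n * S 1) := by ring
          _ = ((k:ℝ) * α + lam) * (((k:ℝ) * α) ^ n * S (n + 1)) := by rw [ihn]
          _ = ((k:ℝ) * α) ^ n * (((k:ℝ) * α + lam) * S (n + 1)) := by ring
          _ = ((k:ℝ) * α) ^ n * ((k:ℝ) * α * S (n + 1 + 1)) := by rw [← h2']
          _ = ((k:ℝ) * α) ^ n * ((k:ℝ) * α) * S (n + 1 + 1) := by ring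
    exact key r le_rfl
  -- constancy above level r
  have hconstkey : ∀ j, r + 1 ≤ j → j ≤ k → S j = S (r + 1) := by
    intro j
    induction j with
    | zero => intro h; omega
    | succ n ih =>
      intro hn1 hn2
      rcases Nat.lt_or_ge (r + 1) (n + 1) with h | h
      · have hrn : r + 1 ≤ n := by omega
        rw [h3 n hrn (by omega), ih hrn (by omega)]
      · have : r + 1 = n + 1 := by omega
        rw [← this]
  have hI : γ * I₁ = (k:ℝ) * α * S (r + 1) := by
    rw [h4, hconstkey k hrk1 le_rfl]
  -- telescoping sum
  have hTel : lam * ∑ i ∈ Finset.range (r + 1), S i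
      = lam * S 0 + (k:ℝ) * α * (S (r + 1) - S 1) := by
    have key : ∀ m, m ≤ r → lam * ∑ i ∈ Finset.range (m + 1), S i
        = lam * S 0 + (k:ℝ) * α * (S (m + 1) - S 1) := by
      intro m
      induction m with
      | zero => intro _; simp
      | succ n ih =>
        intro h
        rw [Finset.sum_range_succ, mul_add, ih (by omega)]
        have h2' := h2 (n + 1) (by omega) (by omega)
        linear_combination -h2'
    exact key r le_rfl
  -- tail sum
  have htail : ∑ i ∈ Finset.range (k + 1), S i
      = (∑ i ∈ Finset.range (r + 1), S i) + ((k:ℝ) - (r:ℝ)) * S (r + 1) := by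
    rw [← Finset.sum_range_add_sum_Ico S (show r + 1 ≤ k + 1 by omega)]
    congr 1
    have hcongr : ∀ i ∈ Finset.Ico (r + 1) (k + 1), S i = S (r + 1) := by
      intro i hi
      rw [Finset.mem_Ico] at hi
      exact hconstkey i hi.1 (by omega)
    rw [Finset.sum_congr rfl hcongr, Finset.sum_const, Nat.card_Ico]
    have h' : k + 1 - (r + 1) = k - r := by omega
    rw [h', nsmul_eq_mul, Nat.cast_sub (by omega)]
  have h7' : (∑ i ∈ Finset.range (r + 1), S i) + ((k:ℝ) - (r:ℝ)) * S (r + 1) + V + I₁ = N := by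
    rw [htail] at h7; linarith
  have hS0 : S 0 = γ * N / β₁ := by
    field_simp at h5 ⊢
    linarith
  -- solve for S (r + 1)
  have hY : α * ((k:ℝ) * γ * (α + lam) * ((k:ℝ) * α) ^ r +
        (γ * lam * (r:ℝ) - ((α + 2 * γ) * lam + α * γ) * (k:ℝ)) * ((k:ℝ) * α + lam) ^ r)
        * S (r + 1)
      = γ * lam * ((k:ℝ) * α + lam) ^ r * ((α + lam) * S 0 - α * N) := by
    linear_combination (-(α * γ * lam * ((k:ℝ) * α + lam) ^ r)) * h7'
      + (-(γ * lam * ((k:ℝ) * α + lam) ^ r)) * h6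
      + (α * lam * ((k:ℝ) * α + lam) ^ r) * hI
      + (γ * (α + lam) * ((k:ℝ) * α + lam) ^ r) * hTel
      + (-(γ * (α + lam) * ((k:ℝ) * α))) * hpow
  -- solve for the partial sum
  have hP : α * lam * ((k:ℝ) * α + lam) ^ r *
        ((k:ℝ) * γ * (α + lam) * ((k:ℝ) * α) ^ r +
          (γ * lam * (r:ℝ) - ((α + 2 * γ) * lam + α * γ) * (k:ℝ)) * ((k:ℝ) * α + lam) ^ r) *
        (∑ i ∈ Finset.range (r + 1), S i)
      = α * lam * ((k:ℝ) * α + lam) ^ r *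
          ((k:ℝ) * γ * (α + lam) * ((k:ℝ) * α) ^ r +
            (γ * lam * (r:ℝ) - ((α + 2 * γ) * lam + α * γ) * (k:ℝ)) * ((k:ℝ) * α + lam) ^ r)
          * (γ * N / β₁)
        + (k:ℝ) * α * (((k:ℝ) * α + lam) ^ r - ((k:ℝ) * α) ^ r) * γ * lam *
            ((k:ℝ) * α + lam) ^ r * ((α + lam) * (γ * N / β₁) - α * N) := by
    rw [← hS0]
    linear_combination (α * ((k:ℝ) * α + lam) ^ r *
        ((k:ℝ) * γ * (α + lam) * ((k:ℝ) * α) ^ r +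
          (γ * lam * (r:ℝ) - ((α + 2 * γ) * lam + α * γ) * (k:ℝ)) * ((k:ℝ) * α + lam) ^ r)) * hTel
      + ((k:ℝ) * α * (((k:ℝ) * α + lam) ^ r - ((k:ℝ) * α) ^ r)) * hY
      + (-((k:ℝ) * α * α *
          ((k:ℝ) * γ * (α + lam) * ((k:ℝ) * α) ^ r +
            (γ * lam * (r:ℝ) - ((α + 2 * γ) * lam + α * γ) * (k:ℝ)) * ((k:ℝ) * α + lam) ^ r))) * hpow
  have hden' : (k : ℝ) * γ * (α + lam) * ((k : ℝ) * α) ^ r +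
      (γ * lam * (r : ℝ) - ((α + 2 * γ) * lam + α * γ) * (k : ℝ)) *
        ((k : ℝ) * α + lam) ^ r ≠ 0 := by
    have hb : α * (k:ℝ) + lam = (k:ℝ) * α + lam := by ring
    rwa [hb] at hden
  have hne : α * lam * ((k:ℝ) * α + lam) ^ r *
      ((k:ℝ) * γ * (α + lam) * ((k:ℝ) * α) ^ r +
        (γ * lam * (r:ℝ) - ((α + 2 * γ) * lam + α * γ) * (k:ℝ)) * ((k:ℝ) * α + lam) ^ r) ≠ 0 := by
    apply mul_ne_zero _ hden'
    positivity
  have hPval : (∑ i ∈ Finset.range (r + 1), S i)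
      = (α * lam * ((k:ℝ) * α + lam) ^ r *
          ((k:ℝ) * γ * (α + lam) * ((k:ℝ) * α) ^ r +
            (γ * lam * (r:ℝ) - ((α + 2 * γ) * lam + α * γ) * (k:ℝ)) * ((k:ℝ) * α + lam) ^ r)
          * (γ * N / β₁)
        + (k:ℝ) * α * (((k:ℝ) * α + lam) ^ r - ((k:ℝ) * α) ^ r) * γ * lam *
            ((k:ℝ) * α + lam) ^ r * ((α + lam) * (γ * N / β₁) - α * N)) /
        (α * lam * ((k:ℝ) * α + lam) ^ r *
          ((k:ℝ) * γ * (α + lam) * ((k:ℝ) * α) ^ r +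
            (γ * lam * (r:ℝ) - ((α + 2 * γ) * lam + α * γ) * (k:ℝ)) * ((k:ℝ) * α + lam) ^ r)) := by
    rw [eq_div_iff hne]
    linear_combination hP
  rw [hPval]
  have hb : α * (k:ℝ) + lam = (k:ℝ) * α + lam := by ring
  rw [hb]
  field_simp
  ring
end
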